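/- arXiv:2401.16602 — 2 statements merged into one kernel-verified Lean document; each statement's English description precedes it below -/
import Mathlib

section
/- Let k be any field of characteristic ≠ 2, and let i, j ≥ 1 be any positive integers. For any integer r with 0 ≤ r < i, if m_{i,j}(k) < ∞, then m_{i,j}(k) ≥ m_{i−r,j}(k) − r. -/
/-!  Diagonal quadratic forms over a field of characteristic ≠ 2.
In characteristic ≠ 2 every regular quadratic form is isometric to a diagonal form
`⟨d 1, …, d n⟩`, so we model (regular) quadratic forms by their diagonal
coefficient functions. -/

/-- The diagonal quadratic form `⟨d i⟩_{i : ι}` over `k`. -/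
noncomputable def diagQF (k : Type) [Field k] {ι : Type} [Fintype ι] (d : ι → k) :
    QuadraticForm k (ι → k) :=
  QuadraticMap.weightedSumSquares k d

/-- Isometry of (diagonal) quadratic forms. -/
def FormIsom (k : Type) [Field k] {ι κ : Type} [Fintype ι] [Fintype κ]
    (d : ι → k) (e : κ → k) : Prop :=
  QuadraticMap.Equivalent (diagQF k d) (diagQF k e)

/-- The orthogonal sum of `m` copies of the hyperbolic plane `⟨1, -1⟩`. -/
def hypForm (k : Type) [Field k] (m : ℕ) : Fin (2 * m) → k :=
  fun j => if j.val % 2 = 0 then 1 else -1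

/-- The Witt index of a (diagonal) form: the largest `m` such that the form is isometric
to `m·ℍ ⟂ (rest)` for some diagonal form `rest`. -/
noncomputable def wittIndex (k : Type) [Field k] {ι : Type} [Fintype ι] (d : ι → k) : ℕ :=
  sSup {m : ℕ | ∃ (s : ℕ) (e : Fin s → k), FormIsom k d (Sum.elim (hypForm k m) e)}
/-- The u-invariant of a field: the supremum of the dimensions of anisotropic regular
quadratic forms over `k` (`⊤` if unbounded). -/
noncomputable def uInv (k : Type) [Field k] : ℕ∞ :=
  sSup {N : ℕ∞ | ∃ n : ℕ, N = n ∧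
    ∃ d : Fin n → k, (∀ t, d t ≠ 0) ∧ (diagQF k d).Anisotropic}

/-- The refined m-invariant `m_{i,j}(k)`: the least dimension (`⊤` if there is none) of a
regular quadratic form `q` of dimension ≥ 1 over `k` with `i_W(q) < j` such that
`i_W(q ⟂ σ) ≥ j` for every `i`-dimensional regular form `σ` over `k`. -/
noncomputable def mInv (k : Type) [Field k] (i j : ℕ) : ℕ∞ :=
  sInf {N : ℕ∞ | ∃ n : ℕ, N = n ∧ 1 ≤ n ∧
    ∃ d : Fin n → k, (∀ t, d t ≠ 0) ∧ wittIndex k d < j ∧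
      ∀ σ : Fin i → k, (∀ t, σ t ≠ 0) → j ≤ wittIndex k (Sum.elim d σ)}

section infra
variable {k : Type} [Field k] {ι κ μ : Type} [Fintype ι] [Fintype κ] [Fintype μ]

theorem formIsom_refl (d : ι → k) : FormIsom k d d := QuadraticMap.Equivalent.refl _
theorem formIsom_symm {d : ι → k} {e : κ → k} (h : FormIsom k d e) : FormIsom k e d :=
  QuadraticMap.Equivalent.symm h
theorem formIsom_trans {d : ι → k} {e : κ → k} {f : μ → k} (h : FormIsom k d e)
    (h' : FormIsom k e f) : FormIsom k d f := QuadraticMap.Equivalent.trans h h'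

theorem formIsom_reindex (ε : κ ≃ ι) (d : ι → k) : FormIsom k (d ∘ ε) d := by
  refine ⟨⟨LinearEquiv.funCongrLeft k k ε.symm, fun v => ?_⟩⟩
  show diagQF k d (v ∘ ε.symm) = diagQF k (d ∘ ε) v
  simp only [diagQF, QuadraticMap.weightedSumSquares_apply]
  exact (Fintype.sum_equiv ε (fun x => (d ∘ ε) x • (v x * v x))
    (fun y => d y • (v (ε.symm y) * v (ε.symm y))) (fun x => by simp)).symm

/-- isometry with the product form -/
noncomputable def sumIsometry (d : ι → k) (e : κ → k) :
    (diagQF k (Sum.elim d e)).IsometryEquiv ((diagQF k d).prod (diagQF k e)) where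
  toLinearEquiv := LinearEquiv.sumArrowLequivProdArrow ι κ k k
  map_app' v := by
    simp [diagQF, QuadraticMap.weightedSumSquares_apply, Fintype.sum_sum_type]

theorem formIsom_sum_congr {d : ι → k} {e : κ → k} {ι' κ' : Type} [Fintype ι'] [Fintype κ']
    {d' : ι' → k} {e' : κ' → k} (h1 : FormIsom k d d') (h2 : FormIsom k e e') :
    FormIsom k (Sum.elim d e) (Sum.elim d' e') :=
  QuadraticMap.Equivalent.trans ⟨sumIsometry d e⟩
    (QuadraticMap.Equivalent.trans (QuadraticMap.Equivalent.prod h1 h2)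
      ⟨(sumIsometry d' e').symm⟩)

theorem formIsom_assoc (d : ι → k) (f : κ → k) (g : μ → k) :
    FormIsom k (Sum.elim (Sum.elim d f) g) (Sum.elim d (Sum.elim f g)) := by
  have h : Sum.elim d (Sum.elim f g) ∘ (Equiv.sumAssoc ι κ μ) = Sum.elim (Sum.elim d f) g := by
    funext x; rcases x with (x | x) | x <;> rfl
  have := formIsom_reindex (Equiv.sumAssoc ι κ μ) (Sum.elim d (Sum.elim f g))
  rwa [h] at this

theorem card_eq_of_formIsom {d : ι → k} {e : κ → k} (h : FormIsom k d e) :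
    Fintype.card ι = Fintype.card κ := by
  obtain ⟨f⟩ := h
  have := f.toLinearEquiv.finrank_eq
  rwa [Module.finrank_fintype_fun_eq_card, Module.finrank_fintype_fun_eq_card] at this

theorem wittIndex_congr {d : ι → k} {e : κ → k} (h : FormIsom k d e) :
    wittIndex k d = wittIndex k e := by
  unfold wittIndex
  congr 1
  ext m
  exact ⟨fun ⟨s, e', h'⟩ => ⟨s, e', formIsom_trans (formIsom_symm h) h'⟩,
    fun ⟨s, e', h'⟩ => ⟨s, e', formIsom_trans h h'⟩⟩

theorem zero_mem_wittSet (d : ι → k) :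
    0 ∈ {m : ℕ | ∃ (s : ℕ) (e : Fin s → k), FormIsom k d (Sum.elim (hypForm k m) e)} := by
  let e0 : Fin (Fintype.card ι) ≃ (Fin (2 * 0) ⊕ Fin (Fintype.card ι)) :=
    { toFun := Sum.inr,
      invFun := Sum.elim (fun x => ((Nat.not_lt_zero x.1) (by simpa using x.2)).elim) id,
      left_inv := fun y => rfl,
      right_inv := by
        rintro (x | y)
        · exact ((Nat.not_lt_zero x.1) (by simpa using x.2)).elim
        · rfl }
  let ε : ι ≃ (Fin (2 * 0) ⊕ Fin (Fintype.card ι)) := (Fintype.equivFin ι).trans e0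
  refine ⟨Fintype.card ι, fun y => d ((Fintype.equivFin ι).symm y), ?_⟩
  have hε : (Sum.elim (hypForm k 0) (fun y => d ((Fintype.equivFin ι).symm y))) ∘ ε = d := by
    funext x
    have hx : ε x = Sum.inr ((Fintype.equivFin ι) x) := rfl
    simp only [Function.comp_apply, hx, Sum.elim_inr, Equiv.symm_apply_apply]
  have := formIsom_reindex ε (Sum.elim (hypForm k 0) (fun y => d ((Fintype.equivFin ι).symm y)))
  rwa [hε] at this

theorem wittSet_bddAbove (d : ι → k) :
    BddAbove {m : ℕ | ∃ (s : ℕ) (e : Fin s → k), FormIsom k d (Sum.elim (hypForm k m) e)} := by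
  refine ⟨Fintype.card ι, fun m hm => ?_⟩
  obtain ⟨s, e, h⟩ := hm
  have := card_eq_of_formIsom h
  simp only [Fintype.card_sum, Fintype.card_fin] at this
  omega

theorem wittIndex_le_sum (d : ι → k) (g : κ → k) :
    wittIndex k d ≤ wittIndex k (Sum.elim d g) := by
  refine csSup_le_csSup (wittSet_bddAbove _) ⟨0, zero_mem_wittSet d⟩ ?_
  rintro m ⟨s, e, h⟩
  have γ : (Fin s ⊕ κ) ≃ Fin (s + Fintype.card κ) :=
    ((Equiv.refl (Fin s)).sumCongr (Fintype.equivFin κ)).trans finSumFinEquiv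
  refine ⟨s + Fintype.card κ, (Sum.elim e g) ∘ γ.symm, ?_⟩
  have step1 : FormIsom k (Sum.elim d g) (Sum.elim (hypForm k m) (Sum.elim e g)) :=
    formIsom_trans (formIsom_sum_congr h (formIsom_refl g)) (formIsom_assoc _ _ _)
  refine formIsom_trans step1 (formIsom_sum_congr (formIsom_refl _) ?_)
  have h2 : ((Sum.elim e g) ∘ γ.symm) ∘ γ = Sum.elim e g := by
    funext x; simp
  have := formIsom_reindex γ ((Sum.elim e g) ∘ γ.symm)
  rwa [h2] at this

end infra

/-- Helper predicate: `d` is a witness form for `m_{i,j}` of dimension `n`. -/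
def Witness (k : Type) [Field k] (j i n : ℕ) : Prop :=
  ∃ d : Fin n → k, (∀ t, d t ≠ 0) ∧ wittIndex k d < j ∧
    ∀ σ : Fin i → k, (∀ t, σ t ≠ 0) → j ≤ wittIndex k (Sum.elim d σ)

/-- The canonical equivalence `Fin 1 ⊕ Fin m ≃ Fin (m+1)`. -/
def tauEquiv (m : ℕ) : (Fin 1 ⊕ Fin m) ≃ Fin (m + 1) :=
  finSumFinEquiv.trans (finCongr (Nat.add_comm 1 m))

section main
variable {k : Type} [Field k]

theorem witness_step (j i'' n : ℕ) (hW : Witness k j (i'' + 2) n) :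
    Witness k j (i'' + 1) n ∨ Witness k j (i'' + 1) (n + 1) := by
  obtain ⟨d, hd0, hdw, hdext⟩ := hW
  by_cases hcase : ∃ a : k, a ≠ 0 ∧
      wittIndex k ((Sum.elim d (fun _ : Fin 1 => a)) ∘ (finSumFinEquiv : Fin n ⊕ Fin 1 ≃ Fin (n + 1)).symm) < j
  · obtain ⟨a, ha0, haw⟩ := hcase
    right
    refine ⟨(Sum.elim d (fun _ : Fin 1 => a)) ∘ (finSumFinEquiv : Fin n ⊕ Fin 1 ≃ Fin (n + 1)).symm, ?_, haw, ?_⟩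
    · intro t
      rcases h : (finSumFinEquiv : Fin n ⊕ Fin 1 ≃ Fin (n + 1)).symm t with x | x <;>
        simp [Function.comp_apply, h, hd0, ha0]
    · intro σ hσ
      set σp : Fin (i'' + 2) → k :=
        (Sum.elim (fun _ : Fin 1 => a) σ) ∘ (tauEquiv (i'' + 1)).symm with hσpdef
      have hσp0 : ∀ t, σp t ≠ 0 := by
        intro t
        rcases h : (tauEquiv (i'' + 1)).symm t with x | x <;>
          simp [σp, Function.comp_apply, h, ha0, hσ]
      have hj := hdext σp hσp0
      have I1 : FormIsom k (Sum.elim (fun _ : Fin 1 => a) σ) σp := by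
        have h2 : σp ∘ (tauEquiv (i'' + 1)) = Sum.elim (fun _ : Fin 1 => a) σ := by
          funext x; simp [σp]
        have h3 := formIsom_reindex (tauEquiv (i'' + 1)) σp
        rwa [h2] at h3
      have I0 : FormIsom k (Sum.elim d (fun _ : Fin 1 => a))
          ((Sum.elim d (fun _ : Fin 1 => a)) ∘ (finSumFinEquiv : Fin n ⊕ Fin 1 ≃ Fin (n + 1)).symm) := by
        have h3 : ((Sum.elim d (fun _ : Fin 1 => a)) ∘ (finSumFinEquiv : Fin n ⊕ Fin 1 ≃ Fin (n + 1)).symm) ∘ (finSumFinEquiv : Fin n ⊕ Fin 1 ≃ Fin (n + 1))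
            = Sum.elim d (fun _ : Fin 1 => a) := by
          funext x; simp
        have h4 := formIsom_reindex (finSumFinEquiv : Fin n ⊕ Fin 1 ≃ Fin (n + 1))
          ((Sum.elim d (fun _ : Fin 1 => a)) ∘ (finSumFinEquiv : Fin n ⊕ Fin 1 ≃ Fin (n + 1)).symm)
        rwa [h3] at h4
      have I2 : FormIsom k (Sum.elim d σp)
          (Sum.elim ((Sum.elim d (fun _ : Fin 1 => a)) ∘ (finSumFinEquiv : Fin n ⊕ Fin 1 ≃ Fin (n + 1)).symm) σ) :=
        formIsom_trans (formIsom_sum_congr (formIsom_refl d) (formIsom_symm I1))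
          (formIsom_trans (formIsom_symm (formIsom_assoc d (fun _ : Fin 1 => a) σ))
            (formIsom_sum_congr I0 (formIsom_refl σ)))
      calc j ≤ wittIndex k (Sum.elim d σp) := hj
        _ = _ := wittIndex_congr I2
  · left
    push_neg at hcase
    refine ⟨d, hd0, hdw, ?_⟩
    intro σ hσ
    set a : k := σ ((tauEquiv i'') (Sum.inl 0)) with hadef
    have key : j ≤ wittIndex k ((Sum.elim d (fun _ : Fin 1 => a)) ∘ (finSumFinEquiv : Fin n ⊕ Fin 1 ≃ Fin (n + 1)).symm) :=
      hcase a (hσ _)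
    set f : Fin 1 → k := fun _ => a with hfdef
    set g : Fin i'' → k := σ ∘ (tauEquiv i'') ∘ Sum.inr with hgdef
    have hfg : σ ∘ (tauEquiv i'') = Sum.elim f g := by
      funext x
      rcases x with x | x
      · have hx1 : x = 0 := Subsingleton.elim _ _
        simp [f, hx1, a]
      · rfl
    have I0 : FormIsom k (Sum.elim d (fun _ : Fin 1 => a))
        ((Sum.elim d (fun _ : Fin 1 => a)) ∘ (finSumFinEquiv : Fin n ⊕ Fin 1 ≃ Fin (n + 1)).symm) := by
      have h3 : ((Sum.elim d (fun _ : Fin 1 => a)) ∘ (finSumFinEquiv : Fin n ⊕ Fin 1 ≃ Fin (n + 1)).symm) ∘ (finSumFinEquiv : Fin n ⊕ Fin 1 ≃ Fin (n + 1))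
          = Sum.elim d (fun _ : Fin 1 => a) := by
        funext x; simp
      have h4 := formIsom_reindex (finSumFinEquiv : Fin n ⊕ Fin 1 ≃ Fin (n + 1))
        ((Sum.elim d (fun _ : Fin 1 => a)) ∘ (finSumFinEquiv : Fin n ⊕ Fin 1 ≃ Fin (n + 1)).symm)
      rwa [h3] at h4
    have I1 : FormIsom k (Sum.elim d (σ ∘ (tauEquiv i''))) (Sum.elim d σ) := by
      have h3 := formIsom_reindex (tauEquiv i'') σ
      exact formIsom_sum_congr (formIsom_refl d) h3
    calc j ≤ wittIndex k ((Sum.elim d (fun _ : Fin 1 => a)) ∘ (finSumFinEquiv : Fin n ⊕ Fin 1 ≃ Fin (n + 1)).symm) := key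
      _ = wittIndex k (Sum.elim d f) := (wittIndex_congr I0).symm
      _ ≤ wittIndex k (Sum.elim (Sum.elim d f) g) := wittIndex_le_sum _ _
      _ = wittIndex k (Sum.elim d (Sum.elim f g)) := wittIndex_congr (formIsom_assoc d f g)
      _ = wittIndex k (Sum.elim d (σ ∘ (tauEquiv i''))) := by rw [hfg]
      _ = wittIndex k (Sum.elim d σ) := wittIndex_congr I1

theorem exists_witness_sub (j : ℕ) :
    ∀ (r i n : ℕ), 1 ≤ i - r → 1 ≤ n → Witness k j i n →
      ∃ n', 1 ≤ n' ∧ n' ≤ n + r ∧ Witness k j (i - r) n' := by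
  intro r
  induction r with
  | zero =>
    intro i n h1 hn hW
    exact ⟨n, hn, by omega, by simpa using hW⟩
  | succ r ih =>
    intro i n h1 hn hW
    have h2 : 1 ≤ i - r := by omega
    obtain ⟨n', hn', hle, hW'⟩ := ih i n h2 hn hW
    obtain ⟨i'', hi''⟩ : ∃ i'', i - (r + 1) = i'' + 1 := ⟨i - (r + 1) - 1, by omega⟩
    have hrw : i - r = i'' + 2 := by omega
    rw [hrw] at hW'
    rcases witness_step j i'' n' hW' with h | h
    · exact ⟨n', hn', by omega, by rw [hi'']; exact h⟩
    · exact ⟨n' + 1, by omega, by omega, by rw [hi'']; exact h⟩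

end main

/-- **Proposition (decreasing `i` in `m_{i,j}`).**  Let `k` be a field of characteristic
≠ 2 and `i, j ≥ 1`.  For any integer `r` with `0 ≤ r < i`, if `m_{i,j}(k) < ∞`, then
`m_{i,j}(k) ≥ m_{i-r,j}(k) - r`. -/
theorem statement13 (k : Type) [Field k] (hchar : ringChar k ≠ 2)
    (i j r : ℕ) (hi : 1 ≤ i) (hj : 1 ≤ j) (hr : r < i)
    (hfin : mInv k i j ≠ ⊤) :
    mInv k (i - r) j - (r : ℕ∞) ≤ mInv k i j := by
  rw [tsub_le_iff_right]
  have hne : {N : ℕ∞ | ∃ n : ℕ, N = n ∧ 1 ≤ n ∧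
      ∃ d : Fin n → k, (∀ t, d t ≠ 0) ∧ wittIndex k d < j ∧
        ∀ σ : Fin i → k, (∀ t, σ t ≠ 0) → j ≤ wittIndex k (Sum.elim d σ)}.Nonempty := by
    by_contra h
    rw [Set.not_nonempty_iff_eq_empty] at h
    exact hfin (by rw [mInv, h, sInf_empty])
  have hmem : mInv k i j ∈ {N : ℕ∞ | ∃ n : ℕ, N = n ∧ 1 ≤ n ∧
      ∃ d : Fin n → k, (∀ t, d t ≠ 0) ∧ wittIndex k d < j ∧
        ∀ σ : Fin i → k, (∀ t, σ t ≠ 0) → j ≤ wittIndex k (Sum.elim d σ)} := csInf_mem hne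
  obtain ⟨n, hNn, hn1, d, hd⟩ := hmem
  have hW : Witness k j i n := ⟨d, hd⟩
  obtain ⟨n', hn'1, hn'le, hW'⟩ := exists_witness_sub j r i n (by omega) hn1 hW
  have hle : mInv k (i - r) j ≤ (n' : ℕ∞) := by
    apply sInf_le
    obtain ⟨d', hd'⟩ := hW'
    exact ⟨n', rfl, hn'1, d', hd'⟩
  calc mInv k (i - r) j ≤ (n' : ℕ∞) := hle
    _ ≤ ((n + r : ℕ) : ℕ∞) := by exact_mod_cast hn'le
    _ = (n : ℕ∞) + (r : ℕ∞) := by push_cast; ring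
    _ = mInv k i j + (r : ℕ∞) := by rw [hNn]
end

section
/- Let k, k′ be fields of characteristic ≠ 2. If m_{i,1}(k) = m_{i,1}(k′) for all integers i ≥ 1, then u(k) = u(k′). -/
section Aux

variable {k : Type} [Field k]

lemma diagQF_apply {ι : Type} [Fintype ι] (d : ι → k) (x : ι → k) :
    diagQF k d x = ∑ i, d i * (x i * x i) := by
  simp [diagQF, QuadraticMap.weightedSumSquares_apply, smul_eq_mul]

lemma FormIsom.card_eq {ι κ : Type} [Fintype ι] [Fintype κ] {d : ι → k} {e : κ → k}
    (h : FormIsom k d e) : Fintype.card ι = Fintype.card κ := by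
  obtain ⟨f⟩ := h
  have h1 : Module.finrank k (ι → k) = Module.finrank k (κ → k) :=
    f.toLinearEquiv.finrank_eq
  simpa [Module.finrank_fintype_fun_eq_card] using h1

/-- The set whose sup is the Witt index. -/
def wittSet (k : Type) [Field k] {ι : Type} [Fintype ι] (d : ι → k) : Set ℕ :=
  {m : ℕ | ∃ (s : ℕ) (e : Fin s → k), FormIsom k d (Sum.elim (hypForm k m) e)}

lemma wittIndex_eq {ι : Type} [Fintype ι] (d : ι → k) :
    wittIndex k d = sSup (wittSet k d) := rfl

lemma wittSet_le {ι : Type} [Fintype ι] {d : ι → k} {m : ℕ} (hm : m ∈ wittSet k d) :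
    2 * m ≤ Fintype.card ι := by
  obtain ⟨s, e, he⟩ := hm
  have := he.card_eq
  simp [Fintype.card_sum] at this
  omega

lemma wittSet_bddAbove_s16 {ι : Type} [Fintype ι] (d : ι → k) : BddAbove (wittSet k d) :=
  ⟨Fintype.card ι, fun m hm => by have := wittSet_le hm; omega⟩

lemma exists_mem_of_wittIndex_pos {ι : Type} [Fintype ι] {d : ι → k}
    (h : 1 ≤ wittIndex k d) : ∃ m, 1 ≤ m ∧ m ∈ wittSet k d := by
  have hne : (wittSet k d).Nonempty := by
    by_contra hc
    rw [Set.not_nonempty_iff_eq_empty] at hc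
    rw [wittIndex_eq, hc, csSup_empty] at h
    exact absurd h (by simp)
  have hmem := Nat.sSup_mem hne (wittSet_bddAbove_s16 d)
  exact ⟨_, h, hmem⟩

lemma not_anisotropic_of_wittIndex_pos {ι : Type} [Fintype ι] {d : ι → k}
    (h : 1 ≤ wittIndex k d) : ¬ (diagQF k d).Anisotropic := by
  obtain ⟨m, hm1, s, e, ⟨f⟩⟩ := exists_mem_of_wittIndex_pos h
  intro haniso
  -- the isotropic vector of the hyperbolic plane
  have h2m : 2 ≤ 2 * m := by omega
  set v : (Fin (2 * m) ⊕ Fin s) → k :=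
    Sum.elim (fun i => if i.val ≤ 1 then (1 : k) else 0) 0 with hv
  have hQv : diagQF k (Sum.elim (hypForm k m) e) v = 0 := by
    rw [diagQF_apply, Fintype.sum_sum_type]
    have : ∀ i : Fin (2 * m),
        Sum.elim (hypForm k m) e (Sum.inl i) * (v (Sum.inl i) * v (Sum.inl i)) =
          (if i = (⟨0, by omega⟩ : Fin (2 * m)) then (1:k) else 0) +
          (if i = (⟨1, by omega⟩ : Fin (2 * m)) then (-1:k) else 0) := by
      intro i
      rcases i with ⟨iv, hiv⟩
      simp only [hv, Sum.elim_inl, hypForm, Fin.mk.injEq]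
      rcases Nat.lt_or_ge iv 2 with hlt | hge
      · interval_cases iv <;> norm_num
      · have h1 : ¬ iv ≤ 1 := by omega
        have h2 : ¬ iv = 0 := by omega
        have h3 : ¬ iv = 1 := by omega
        simp [h1, h2, h3]
    rw [Finset.sum_congr rfl fun i _ => this i]
    simp [Finset.sum_add_distrib, hv]
  have hvne : v ≠ 0 := by
    intro hc
    have : v (Sum.inl ⟨0, by omega⟩) = 0 := by rw [hc]; rfl
    simp [hv] at this
  have hmap : diagQF k d (f.symm v) = 0 := (f.symm.map_app v).trans hQv
  have hz := haniso _ hmap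
  rw [show ⇑f.symm = ⇑f.symm.toLinearEquiv from rfl,
    LinearEquiv.map_eq_zero_iff] at hz
  exact hvne hz

end Aux

section Aux2

variable {k : Type} [Field k]

/-- The associated bilinear form of a diagonal quadratic form. -/
noncomputable def diagB {ι : Type} [Fintype ι] (d : ι → k) :
    (ι → k) →ₗ[k] (ι → k) →ₗ[k] k :=
  LinearMap.mk₂ k (fun x y => ∑ t, d t * (x t * y t))
    (fun x x' y => by
      rw [← Finset.sum_add_distrib]
      exact Finset.sum_congr rfl fun t _ => by simp; ring)
    (fun c x y => by
      rw [Finset.smul_sum]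
      exact Finset.sum_congr rfl fun t _ => by simp; ring)
    (fun x y y' => by
      rw [← Finset.sum_add_distrib]
      exact Finset.sum_congr rfl fun t _ => by simp; ring)
    (fun c x y => by
      rw [Finset.smul_sum]
      exact Finset.sum_congr rfl fun t _ => by simp; ring)

lemma diagB_apply {ι : Type} [Fintype ι] (d : ι → k) (x y : ι → k) :
    diagB d x y = ∑ t, d t * (x t * y t) := rfl

lemma diagB_symm {ι : Type} [Fintype ι] (d : ι → k) (x y : ι → k) :
    diagB d x y = diagB d y x := by
  rw [diagB_apply, diagB_apply]
  exact Finset.sum_congr rfl fun t _ => by ring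

lemma diagB_self {ι : Type} [Fintype ι] (d : ι → k) (x : ι → k) :
    diagB d x x = diagQF k d x := by
  rw [diagB_apply, diagQF_apply]

lemma diagQF_add {ι : Type} [Fintype ι] (d : ι → k) (x y : ι → k) :
    diagQF k d (x + y) = diagQF k d x + diagQF k d y + 2 * diagB d x y := by
  rw [diagQF_apply, diagQF_apply, diagQF_apply, diagB_apply, Finset.mul_sum,
    ← Finset.sum_add_distrib, ← Finset.sum_add_distrib]
  exact Finset.sum_congr rfl fun t _ => by simp; ring

lemma diagQF_smul {ι : Type} [Fintype ι] (d : ι → k) (c : k) (x : ι → k) :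
    diagQF k d (c • x) = c * c * diagQF k d x := by
  rw [QuadraticMap.map_smul, smul_eq_mul]

end Aux2

section Hyp

variable {k : Type} [Field k]

open Module Submodule

/-- reindexing a diagonal form along an equivalence of index types -/
lemma diag_reindex {ι κ : Type} [Fintype ι] [Fintype κ] (g : κ ≃ ι) (a : ι → k) :
    FormIsom k a (a ∘ g) := by
  refine ⟨⟨LinearEquiv.funCongrLeft k k g, fun x => ?_⟩⟩
  show diagQF k (a ∘ g) (x ∘ g) = diagQF k a x
  rw [diagQF_apply, diagQF_apply]
  exact Equiv.sum_comp g (fun i => a i * (x i * x i))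

/-- a diagonal form over a sum type is equivalent to the product of the two diagonal forms -/
lemma diag_sum_equiv {ι κ : Type} [Fintype ι] [Fintype κ] (a : ι → k) (b : κ → k) :
    QuadraticMap.Equivalent (diagQF k (Sum.elim a b)) ((diagQF k a).prod (diagQF k b)) := by
  refine ⟨⟨LinearEquiv.sumArrowLequivProdArrow ι κ k k, fun x => ?_⟩⟩
  show (diagQF k a) (fun i => x (Sum.inl i)) + (diagQF k b) (fun j => x (Sum.inr j)) =
    diagQF k (Sum.elim a b) x
  rw [diagQF_apply, diagQF_apply, diagQF_apply, Fintype.sum_sum_type]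
  rfl

set_option maxHeartbeats 2000000 in
theorem wittIndex_pos_of_isotropic {ι : Type} [Fintype ι] (hchar : ringChar k ≠ 2)
    {d : ι → k} (hd : ∀ t, d t ≠ 0) (hiso : ¬ (diagQF k d).Anisotropic) :
    1 ≤ wittIndex k d := by
  classical
  haveI : Invertible (2 : k) := by
    apply invertibleOfRingCharNotDvd
    intro hdvd
    rcases (Nat.dvd_prime Nat.prime_two).1 hdvd with h1 | h2
    · exact CharP.ringChar_ne_one h1
    · exact hchar h2
  have h2ne : (2 : k) ≠ 0 := Invertible.ne_zero 2
  set B := diagB d with hB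
  set Q := diagQF k d with hQdef
  have hsymm : ∀ x y, B x y = B y x := fun x y => diagB_symm d x y
  have hself : ∀ x, B x x = Q x := fun x => diagB_self d x
  have hadd : ∀ x y, Q (x + y) = Q x + Q y + 2 * B x y := fun x y => diagQF_add d x y
  have hsmul : ∀ (c : k) x, Q (c • x) = c * c * Q x := fun c x => diagQF_smul d c x
  have hBcomb : ∀ (α γ : k) (p q y : ι → k),
      B (α • p + γ • q) y = α * B p y + γ * B q y := by
    intro α γ p q y
    simp only [map_add, map_smul, LinearMap.add_apply, LinearMap.smul_apply, smul_eq_mul]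
  -- construct a hyperbolic pair
  obtain ⟨p₁, p₂, hQp₁, hQp₂, hBp₁p₂⟩ :
      ∃ p₁ p₂ : ι → k, Q p₁ = 0 ∧ Q p₂ = 0 ∧ B p₁ p₂ = 1 := by
    rw [QuadraticMap.Anisotropic] at hiso
    push_neg at hiso
    obtain ⟨v, hQv, hvne⟩ := hiso
    obtain ⟨t₀, hvt₀⟩ := Function.ne_iff.1 hvne
    rw [Pi.zero_apply] at hvt₀
    have hBvv : B v v = 0 := by rw [hself, hQv]
    have hb : B v (Pi.single t₀ 1) = d t₀ * v t₀ := by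
      rw [hB, diagB_apply]
      rw [Finset.sum_eq_single t₀]
      · simp
      · intro t _ ht; simp [Pi.single_apply, ht]
      · intro ht; exact absurd (Finset.mem_univ t₀) ht
    set w : ι → k := Pi.single t₀ 1 with hw
    set b : k := B v w with hbdef
    have hbne : b ≠ 0 := by rw [hb]; exact mul_ne_zero (hd t₀) hvt₀
    refine ⟨b⁻¹ • v, w - (Q w / (2 * b)) • v, ?_, ?_, ?_⟩
    · rw [hsmul, hQv, mul_zero]
    · rw [sub_eq_add_neg, ← neg_smul, hadd, hsmul, hQv]
      have h1 : B w (-(Q w / (2 * b)) • v) = -(Q w / (2 * b)) * b := by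
        rw [map_smul, smul_eq_mul, hsymm w v, ← hbdef]
      rw [h1]
      field_simp
      ring
    · have h2 : B v (w - (Q w / (2 * b)) • v) = b := by
        rw [map_sub, map_smul, smul_eq_mul, hBvv, mul_zero, sub_zero, ← hbdef]
      rw [map_smul, LinearMap.smul_apply, h2, smul_eq_mul]
      field_simp
  -- clear the construction; from now on only the three identities matter
  have hBp₁p₁ : B p₁ p₁ = 0 := by rw [hself, hQp₁]
  have hBp₂p₂ : B p₂ p₂ = 0 := by rw [hself, hQp₂]
  have hBp₂p₁ : B p₂ p₁ = 1 := by rw [hsymm, hBp₁p₂]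
  -- the hyperbolic plane P and its orthogonal complement W
  set P : Submodule k (ι → k) := Submodule.span k (Set.range ![p₁, p₂]) with hP
  have hrange : Set.range ![p₁, p₂] = {p₁, p₂} := by
    ext z
    simp [Fin.exists_fin_two, or_comm]
  have hmemP : ∀ x ∈ P, ∃ α γ : k, α • p₁ + γ • p₂ = x := by
    intro x hx
    rw [hP, hrange] at hx
    exact Submodule.mem_span_pair.1 hx
  have hp₁P : p₁ ∈ P := by
    rw [hP, hrange]; exact Submodule.subset_span (by simp)
  have hp₂P : p₂ ∈ P := by
    rw [hP, hrange]; exact Submodule.subset_span (by simp)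
  set W : Submodule k (ι → k) :=
    LinearMap.ker (B.flip p₁) ⊓ LinearMap.ker (B.flip p₂) with hW
  have hmemW : ∀ x, x ∈ W ↔ B x p₁ = 0 ∧ B x p₂ = 0 := by
    intro x
    rw [hW, Submodule.mem_inf, LinearMap.mem_ker, LinearMap.mem_ker]
    exact Iff.rfl
  -- orthogonality of P and W
  have horth : ∀ x ∈ P, ∀ y ∈ W, B x y = 0 := by
    intro x hx y hy
    obtain ⟨α, γ, rfl⟩ := hmemP x hx
    obtain ⟨hy₁, hy₂⟩ := (hmemW y).1 hy
    rw [hBcomb, hsymm p₁ y, hsymm p₂ y, hy₁, hy₂, mul_zero, mul_zero, add_zero]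
  -- IsCompl P W
  have hPW : IsCompl P W := by
    constructor
    · rw [Submodule.disjoint_def]
      intro x hxP hxW
      obtain ⟨α, γ, rfl⟩ := hmemP x hxP
      obtain ⟨hy₁, hy₂⟩ := (hmemW _).1 hxW
      rw [hBcomb, hBp₁p₁, hBp₂p₁, mul_zero, mul_one, zero_add] at hy₁
      rw [hBcomb, hBp₁p₂, hBp₂p₂, mul_zero, mul_one, add_zero] at hy₂
      rw [hy₁, hy₂, zero_smul, zero_smul, add_zero]
    · rw [codisjoint_iff, eq_top_iff]
      intro x _
      have hxd : x = (B x p₂ • p₁ + B x p₁ • p₂) + (x - (B x p₂ • p₁ + B x p₁ • p₂)) := by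
        abel
      rw [hxd]
      apply Submodule.add_mem_sup
      · exact Submodule.add_mem _ (Submodule.smul_mem _ _ hp₁P) (Submodule.smul_mem _ _ hp₂P)
      · rw [hmemW]
        have hz1 : B (x - (B x p₂ • p₁ + B x p₁ • p₂)) p₁
            = B x p₁ - (B x p₂ * B p₁ p₁ + B x p₁ * B p₂ p₁) := by
          rw [map_sub, LinearMap.sub_apply, hBcomb]
        have hz2 : B (x - (B x p₂ • p₁ + B x p₁ • p₂)) p₂
            = B x p₂ - (B x p₂ * B p₁ p₂ + B x p₁ * B p₂ p₂) := by
          rw [map_sub, LinearMap.sub_apply, hBcomb]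
        rw [hz1, hz2, hBp₁p₁, hBp₂p₁, hBp₁p₂, hBp₂p₂]
        constructor <;> ring
  -- the restricted forms
  set QP : QuadraticForm k P := Q.comp P.subtype with hQP
  set QW : QuadraticForm k W := Q.comp W.subtype with hQW
  -- Q is equivalent to QP.prod QW
  have e1 : QuadraticMap.Equivalent (QP.prod QW) Q := by
    refine ⟨⟨Submodule.prodEquivOfIsCompl P W hPW, ?_⟩⟩
    rintro ⟨p, w'⟩
    show Q ((p : ι → k) + (w' : ι → k)) = QP p + QW w'
    rw [hadd, horth _ p.2 _ w'.2, mul_zero, add_zero]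
    rfl
  -- linear independence of p₁, p₂
  have hli : LinearIndependent k ![p₁, p₂] := by
    rw [LinearIndependent.pair_iff]
    intro s t hst
    have h1 : B (s • p₁ + t • p₂) p₂ = s := by rw [hBcomb, hBp₁p₂, hBp₂p₂]; ring
    have h2 : B (s • p₁ + t • p₂) p₁ = t := by rw [hBcomb, hBp₁p₁, hBp₂p₁]; ring
    rw [hst, map_zero, LinearMap.zero_apply] at h1 h2
    exact ⟨h1.symm, h2.symm⟩
  -- basis of P
  set bP : Basis (Fin 2) k P := Basis.span hli with hbP
  have hbP0 : (bP 0 : ι → k) = p₁ := by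
    rw [hbP, Basis.span_apply]; rfl
  have hbP1 : (bP 1 : ι → k) = p₂ := by
    rw [hbP, Basis.span_apply]; rfl
  -- QP is equivalent to the hyperbolic form ⟨1, -1⟩ on Fin 2
  set h2 : Fin 2 → k := fun j => if j.val % 2 = 0 then 1 else -1 with hh2
  have hbasisRepr : ∀ y : Fin 2 → k, (QP.basisRepr bP) y = 2 * (y 0 * y 1) := by
    intro y
    rw [QuadraticMap.basisRepr_apply, Fin.sum_univ_two]
    have hc : QP (y 0 • bP 0 + y 1 • bP 1) = Q (y 0 • p₁ + y 1 • p₂) := by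
      rw [hQP]
      show Q ((((y 0 • bP 0 + y 1 • bP 1) : P) : ι → k)) = _
      push_cast [hbP0, hbP1]
      rfl
    rw [hc, hadd, hsmul, hsmul, hQp₁, hQp₂]
    have : B (y 0 • p₁) (y 1 • p₂) = y 0 * (y 1 * B p₁ p₂) := by
      simp only [map_smul, LinearMap.smul_apply, smul_eq_mul]
      ring
    rw [this, hBp₁p₂]
    ring
  have e2 : QuadraticMap.Equivalent QP (diagQF k h2) := by
    have iso2 := QuadraticMap.isometryEquivBasisRepr QP bP
    have hdiagh2 : ∀ x : Fin 2 → k, diagQF k h2 x = x 0 * x 0 - x 1 * x 1 := by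
      intro x
      rw [diagQF_apply, Fin.sum_univ_two, hh2]
      norm_num
      ring
    set Tl : (Fin 2 → k) →ₗ[k] (Fin 2 → k) :=
      { toFun := fun x => ![(x 0 + x 1) / 2, x 0 - x 1]
        map_add' := fun x y => by
          funext i
          fin_cases i <;> simp <;> ring
        map_smul' := fun c x => by
          funext i
          fin_cases i <;> simp <;> ring } with hTl
    set Tr : (Fin 2 → k) →ₗ[k] (Fin 2 → k) :=
      { toFun := fun y => ![y 0 + y 1 / 2, y 0 - y 1 / 2]
        map_add' := fun x y => by
          funext i
          fin_cases i <;> simp <;> ring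
        map_smul' := fun c x => by
          funext i
          fin_cases i <;> simp <;> ring } with hTr
    have hTlr : Tl.comp Tr = LinearMap.id := by
      apply LinearMap.ext
      intro y
      funext i
      fin_cases i <;>
        simp [hTl, hTr] <;> field_simp <;> ring
    have hTrl : Tr.comp Tl = LinearMap.id := by
      apply LinearMap.ext
      intro y
      funext i
      fin_cases i <;>
        simp [hTl, hTr] <;> field_simp <;> ring
    have e3 : QuadraticMap.Equivalent (diagQF k h2) (QP.basisRepr bP) := by
      refine ⟨⟨LinearEquiv.ofLinear Tl Tr hTlr hTrl, fun x => ?_⟩⟩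
      show (QP.basisRepr bP) (Tl x) = diagQF k h2 x
      rw [hbasisRepr, hdiagh2]
      show 2 * ((![(x 0 + x 1) / 2, x 0 - x 1] : Fin 2 → k) 0 *
        (![(x 0 + x 1) / 2, x 0 - x 1] : Fin 2 → k) 1) = _
      simp only [Matrix.cons_val_zero, Matrix.cons_val_one, Matrix.head_cons]
      field_simp
      ring
    have e2' : QuadraticMap.Equivalent QP (QP.basisRepr bP) := ⟨iso2⟩
    exact e2'.trans e3.symm
  -- diagonalize QW
  obtain ⟨ew, e4⟩ := QuadraticForm.equivalent_weightedSumSquares QW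
  have e4' : QuadraticMap.Equivalent QW (diagQF k ew) := e4
  -- assemble
  have e5 : QuadraticMap.Equivalent (QP.prod QW) ((diagQF k h2).prod (diagQF k ew)) :=
    QuadraticMap.Equivalent.prod e2 e4'
  have e6 : QuadraticMap.Equivalent (diagQF k (Sum.elim h2 ew))
      ((diagQF k h2).prod (diagQF k ew)) := diag_sum_equiv h2 ew
  have etot : QuadraticMap.Equivalent Q (diagQF k (Sum.elim h2 ew)) :=
    (e1.symm.trans e5).trans e6.symm
  -- convert `h2` into `hypForm k 1`
  have h21 : (2 : ℕ) = 2 * 1 := by norm_num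
  have hg : Sum.elim h2 ew ∘ (Equiv.sumCongr (finCongr h21) (Equiv.refl (Fin (finrank k W)))) =
      Sum.elim (hypForm k 1) ew := by
    funext p
    rcases p with j | j
    · rfl
    · rfl
  have efinal : FormIsom k d (Sum.elim (hypForm k 1) ew) := by
    have hre := (diag_reindex (Equiv.sumCongr (finCongr h21) (Equiv.refl (Fin (finrank k W))))
      (Sum.elim h2 ew))
    rw [hg] at hre
    exact (etot.trans hre : QuadraticMap.Equivalent Q _)
  -- conclude
  have hmem : 1 ∈ {m : ℕ | ∃ (s : ℕ) (e : Fin s → k), FormIsom k d (Sum.elim (hypForm k m) e)} :=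
    ⟨finrank k W, ew, efinal⟩
  exact le_csSup ⟨Fintype.card ι, fun m hm => by
    obtain ⟨s, e, he⟩ := hm
    have := he.card_eq
    simp [Fintype.card_sum] at this
    omega⟩ hmem

end Hyp


section Part3

variable {k : Type} [Field k]

/-- Witt index of a one-dimensional form is zero. -/
lemma wittIndex_lt_one_of_card_one {ι : Type} [Fintype ι] (d : ι → k)
    (h1 : Fintype.card ι = 1) : wittIndex k d < 1 := by
  by_contra hc
  push_neg at hc
  obtain ⟨m, hm1, s, e, he⟩ := exists_mem_of_wittIndex_pos hc
  have := he.card_eq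
  simp [Fintype.card_sum] at this
  omega

/-- reindexing preserves anisotropy -/
lemma aniso_reindex {ι κ : Type} [Fintype ι] [Fintype κ] (g : κ ≃ ι) (a : ι → k)
    (h : (diagQF k a).Anisotropic) : (diagQF k (a ∘ g)).Anisotropic := by
  intro x hx
  have hsum : diagQF k a (x ∘ g.symm) = 0 := by
    rw [diagQF_apply]
    rw [← hx, diagQF_apply]
    refine (Fintype.sum_equiv g _ _ fun j => ?_).symm
    simp
  have hz := h _ hsum
  funext j
  have : (x ∘ g.symm) (g j) = 0 := by rw [hz]; rfl
  simpa using this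

/-- extension of an anisotropic form of large dimension by a prescribed 1-dim form -/
lemma exists_aniso_ext {n i : ℕ} (dd : Fin 1 → k) (hdd : dd 0 ≠ 0)
    (d' : Fin n → k) (hd' : ∀ t, d' t ≠ 0) (ha : (diagQF k d').Anisotropic)
    (hni : i < n) :
    ∃ σ : Fin i → k, (∀ t, σ t ≠ 0) ∧ (diagQF k (Sum.elim dd σ)).Anisotropic := by
  classical
  set j0 : Fin n := ⟨0, by omega⟩ with hj0
  set c : k := dd 0 * (d' j0)⁻¹ with hc
  have hcne : c ≠ 0 := mul_ne_zero hdd (inv_ne_zero (hd' j0))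
  set F : (Fin 1 ⊕ Fin i) → Fin n :=
    Sum.elim (fun _ => j0) (fun t => ⟨t.val + 1, by omega⟩) with hF
  have hFinj : Function.Injective F := by
    rintro (p | p) (q | q) h
    · rw [Subsingleton.elim p q]
    · exact absurd (congrArg Fin.val h) (by simp [hF, hj0])
    · exact absurd (congrArg Fin.val h) (by simp [hF, hj0])
    · have : p.val = q.val := by
        have := congrArg Fin.val h
        simp [hF] at this
        exact this
      exact congrArg Sum.inr (Fin.ext this)
  have hcF : ∀ p : Fin 1 ⊕ Fin i, c * d' (F p) = Sum.elim dd (fun t => c * d' (F (Sum.inr t))) p := by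
    rintro (p | p)
    · show c * d' j0 = dd p
      rw [hc, Subsingleton.elim p 0, mul_assoc, inv_mul_cancel₀ (hd' j0), mul_one]
    · rfl
  refine ⟨fun t => c * d' (F (Sum.inr t)), fun t => mul_ne_zero hcne (hd' _), ?_⟩
  intro x hx
  set z : Fin n → k := fun j => if h : ∃ p, F p = j then x h.choose else 0 with hz
  have hzF : ∀ p, z (F p) = x p := by
    intro p
    simp only [hz]
    have hex : ∃ q, F q = F p := ⟨p, rfl⟩
    rw [dif_pos hex]
    congr 1
    exact hFinj hex.choose_spec
  have hsum : ∑ j, (c * d' j) * (z j * z j) = 0 := by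
    have hsub : (Finset.univ.image F) ⊆ Finset.univ := Finset.subset_univ _
    rw [← Finset.sum_subset hsub ?van]
    case van =>
      intro j _ hj
      have : ¬ ∃ p, F p = j := by
        intro ⟨p, hp⟩
        exact hj (Finset.mem_image.2 ⟨p, Finset.mem_univ p, hp⟩)
      rw [hz]
      simp only [dif_neg this]
      ring
    rw [Finset.sum_image (fun p _ q _ h => hFinj h)]
    rw [← hx, diagQF_apply]
    refine Finset.sum_congr rfl fun p _ => ?_
    rw [hzF, hcF]
  have hzero : diagQF k d' z = 0 := by
    rw [diagQF_apply]
    have : ∑ j, d' j * (z j * z j) = c⁻¹ * ∑ j, (c * d' j) * (z j * z j) := by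
      rw [Finset.mul_sum]
      refine Finset.sum_congr rfl fun j _ => ?_
      field_simp
    rw [this, hsum, mul_zero]
  have hzz := ha _ hzero
  funext p
  have : z (F p) = 0 := by rw [hzz]; rfl
  rw [hzF] at this
  exact this

lemma uInv_pos : 1 ≤ uInv k := by
  apply le_sSup
  refine ⟨1, by norm_num, fun _ => 1, fun _ => one_ne_zero, ?_⟩
  intro x hx
  rw [diagQF_apply] at hx
  simp only [one_mul, Fin.sum_univ_one] at hx
  have : x 0 = 0 := by
    have := mul_self_eq_zero.1 hx
    exact this
  funext t
  rw [Subsingleton.elim t 0, this]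
  rfl

lemma mInv_one_iff (hchar : ringChar k ≠ 2) (i : ℕ) (hi : 1 ≤ i) :
    mInv k i 1 = 1 ↔ uInv k ≤ i := by
  constructor
  · intro hm
    -- extract a 1-dimensional witness
    have h1mem : (1 : ℕ∞) ∈ {N : ℕ∞ | ∃ n : ℕ, N = n ∧ 1 ≤ n ∧
        ∃ d : Fin n → k, (∀ t, d t ≠ 0) ∧ wittIndex k d < 1 ∧
          ∀ σ : Fin i → k, (∀ t, σ t ≠ 0) → 1 ≤ wittIndex k (Sum.elim d σ)} := by
      by_contra hne
      have h2 : (2 : ℕ∞) ≤ mInv k i 1 := by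
        apply le_sInf
        rintro N ⟨n, rfl, hn1, hrest⟩
        have hnne1 : n ≠ 1 := by
          intro heq
          subst heq
          exact hne ⟨1, by norm_num, hn1, hrest⟩
        have hn2 : 2 ≤ n := by omega
        exact_mod_cast hn2
      rw [hm] at h2
      norm_num at h2
    obtain ⟨n, hn1, hnge, dd, hdd, hw, hσ⟩ := h1mem
    have hn : n = 1 := by exact_mod_cast hn1.symm
    subst hn
    -- now show every anisotropic form has dimension ≤ i
    apply sSup_le
    rintro N ⟨n, rfl, d', hd', ha⟩
    have hni : n ≤ i := by
      by_contra hgt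
      push_neg at hgt
      obtain ⟨σ, hσne, hσa⟩ := exists_aniso_ext dd (hdd 0) d' hd' ha hgt
      exact not_anisotropic_of_wittIndex_pos (hσ σ hσne) hσa
    exact_mod_cast hni
  · intro hu
    apply le_antisymm
    · apply sInf_le
      refine ⟨1, by norm_num, le_refl 1, fun _ => 1, fun _ => one_ne_zero,
        wittIndex_lt_one_of_card_one _ (by simp), ?_⟩
      intro σ hσ
      apply wittIndex_pos_of_isotropic hchar
      · rintro (t | t)
        · exact one_ne_zero
        · exact hσ t
      -- if it were anisotropic, the u-invariant would exceed i
      intro haniso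
      have hre := aniso_reindex (finSumFinEquiv.symm : Fin (1 + i) ≃ (Fin 1 ⊕ Fin i)) _ haniso
      have hmem : ((1 + i : ℕ) : ℕ∞) ∈ {N : ℕ∞ | ∃ n : ℕ, N = n ∧
          ∃ d : Fin n → k, (∀ t, d t ≠ 0) ∧ (diagQF k d).Anisotropic} := by
        refine ⟨1 + i, rfl, _, ?_, hre⟩
        intro t
        rcases h : (finSumFinEquiv.symm : Fin (1 + i) ≃ (Fin 1 ⊕ Fin i)) t with p | p
        · show (Sum.elim _ σ) ((finSumFinEquiv.symm) t) ≠ 0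
          rw [h]; exact one_ne_zero
        · show (Sum.elim _ σ) ((finSumFinEquiv.symm) t) ≠ 0
          rw [h]; exact hσ p
      have hle : ((1 + i : ℕ) : ℕ∞) ≤ (i : ℕ∞) := le_trans (le_sSup hmem) hu
      have : (1 + i : ℕ) ≤ i := by exact_mod_cast hle
      omega
    · apply le_sInf
      rintro N ⟨n, rfl, hn1, _⟩
      exact_mod_cast hn1

lemma uInv_eq_of_mInv (hchar : ringChar k ≠ 2) :
    uInv k = sInf {N : ℕ∞ | ∃ i : ℕ, N = i ∧ 1 ≤ i ∧ mInv k i 1 = 1} := by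
  have hrw : {N : ℕ∞ | ∃ i : ℕ, N = i ∧ 1 ≤ i ∧ mInv k i 1 = 1} =
      {N : ℕ∞ | ∃ i : ℕ, N = i ∧ 1 ≤ i ∧ uInv k ≤ i} := by
    ext N
    constructor
    · rintro ⟨i, rfl, hi, hmi⟩
      exact ⟨i, rfl, hi, (mInv_one_iff hchar i hi).1 hmi⟩
    · rintro ⟨i, rfl, hi, hui⟩
      exact ⟨i, rfl, hi, (mInv_one_iff hchar i hi).2 hui⟩
  rw [hrw]
  apply le_antisymm
  · apply le_sInf
    rintro N ⟨i, rfl, hi, hui⟩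
    exact hui
  · rcases eq_or_ne (uInv k) ⊤ with htop | hfin
    · rw [htop]
      exact le_top
    · obtain ⟨u₀, hu₀⟩ : ∃ u₀ : ℕ, uInv k = (u₀ : ℕ∞) := by
        lift uInv k to ℕ using hfin with u₀ hu
        exact ⟨u₀, rfl⟩
      have h1u : 1 ≤ u₀ := by
        have := uInv_pos (k := k)
        rw [hu₀] at this
        exact_mod_cast this
      apply sInf_le
      exact ⟨u₀, hu₀, h1u, le_of_eq hu₀⟩

end Part3

/-- **Theorem (the refined m-invariants determine the u-invariant).**  Let `k, k'` be
fields of characteristic ≠ 2.  If `m_{i,1}(k) = m_{i,1}(k')` for all integers `i ≥ 1`,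
then `u(k) = u(k')`. -/
theorem statement16 (k k' : Type) [Field k] [Field k']
    (hchar : ringChar k ≠ 2) (hchar' : ringChar k' ≠ 2)
    (h : ∀ i : ℕ, 1 ≤ i → mInv k i 1 = mInv k' i 1) :
    uInv k = uInv k' := by
  rw [uInv_eq_of_mInv hchar, uInv_eq_of_mInv hchar']
  congr 1
  ext N
  constructor
  · rintro ⟨i, rfl, hi, hm⟩
    exact ⟨i, rfl, hi, by rw [← h i hi]; exact hm⟩
  · rintro ⟨i, rfl, hi, hm⟩
    exact ⟨i, rfl, hi, by rw [h i hi]; exact hm⟩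
end
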